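/- Let F : ℝ^n → ℝ^m be continuously differentiable, x ∈ ℝ^n, B a symmetric positive definite n×n real matrix, and α_1,…,α_m > 0. Let d* be the unique minimizer over ℝ^n of d ↦ max_{i∈{1,…,m}} ⟨∇F_i(x), d⟩/α_i + (1/2)‖d‖_B². Then the following statements are equivalent: (a) x is not Pareto critical for F; (b) d* ≠ 0; (c) ⟨∇F_i(x), d*⟩ < 0 for all i ∈ {1,…,m}. -/

import Mathlib

open scoped RealInnerProductSpace

/-- Maximum of a function over the (nonempty) finite index type `Fin m`. -/
noncomputable def fmax {m : ℕ} [NeZero m] (f : Fin m → ℝ) : ℝ :=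
  Finset.univ.sup' Finset.univ_nonempty f

/-- A point `x` is Pareto critical for `F` if there is no direction `d` with
`⟨∇F_i(x), d⟩ < 0` for all `i`. -/
def ParetoCritical {n m : ℕ} (F : Fin m → EuclideanSpace ℝ (Fin n) → ℝ)
    (x : EuclideanSpace ℝ (Fin n)) : Prop :=
  ¬∃ d : EuclideanSpace ℝ (Fin n), ∀ i, ⟪gradient (F i) x, d⟫ < 0

/-!
The model `φ(d) = maxᵢ ⟨gᵢ, d⟩/αᵢ + ⟨d, B d⟩/2` vanishes at `0`, so its minimizer `d*` has
`φ(d*) ≤ 0`. If `d* ≠ 0` the quadratic term is positive, forcing every `⟨gᵢ, d*⟩` to be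
negative. Conversely, along a common descent direction `d` the model is
`t M + t² c / 2` with `M < 0 < c` for `t ≥ 0`, which is negative for small `t > 0`;
hence `φ(d*) < 0 = φ(0)` and `d* ≠ 0`.
-/

section fmax

variable {m : ℕ} [NeZero m]

lemma le_fmax (f : Fin m → ℝ) (i : Fin m) : f i ≤ fmax f :=
  Finset.le_sup' f (Finset.mem_univ i)

lemma fmax_lt_iff {f : Fin m → ℝ} {a : ℝ} : fmax f < a ↔ ∀ i, f i < a := by
  simp [fmax, Finset.sup'_lt_iff]

lemma fmax_const_mul {t : ℝ} (ht : 0 ≤ t) (f : Fin m → ℝ) :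
    (fmax fun i => t * f i) = t * fmax f :=
  (Finset.mul₀_sup' ht f _ _).symm

end fmax

section descentModel

variable {E : Type*} [NormedAddCommGroup E] [InnerProductSpace ℝ E] {m : ℕ} [NeZero m]
  (g : Fin m → E) (α : Fin m → ℝ) (B : E →ₗ[ℝ] E)

noncomputable def descentModel (d : E) : ℝ :=
  (fmax fun i => ⟪g i, d⟫ / α i) + ⟪d, B d⟫ / 2

lemma descentModel_zero : descentModel g α B 0 = 0 := by
  simp [descentModel, fmax]

lemma descentModel_smul {t : ℝ} (ht : 0 ≤ t) (d : E) :
    descentModel g α B (t • d) =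
      t * (fmax fun i => ⟪g i, d⟫ / α i) + t ^ 2 * ⟪d, B d⟫ / 2 := by
  simp only [descentModel, map_smul, real_inner_smul_left, real_inner_smul_right, mul_div_assoc,
    fmax_const_mul ht]
  ring

variable {g α B}

lemma inner_neg_of_descentModel_nonpos (hα : ∀ i, 0 < α i)
    (hB : ∀ d : E, d ≠ 0 → 0 < ⟪d, B d⟫) {d : E} (hd : d ≠ 0)
    (hφ : descentModel g α B d ≤ 0) (i : Fin m) : ⟪g i, d⟫ < 0 := by
  have hquad := hB d hd
  have hi : ⟪g i, d⟫ / α i < 0 := by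
    have := le_fmax (fun i => ⟪g i, d⟫ / α i) i
    unfold descentModel at hφ
    linarith
  exact neg_of_div_neg_left hi (hα i).le

lemma exists_descentModel_neg (hα : ∀ i, 0 < α i) (hB : ∀ d : E, d ≠ 0 → 0 < ⟪d, B d⟫)
    {d : E} (hdesc : ∀ i, ⟪g i, d⟫ < 0) : ∃ e, descentModel g α B e < 0 := by
  set M := fmax fun i => ⟪g i, d⟫ / α i
  have hM : M < 0 := fmax_lt_iff.mpr fun i => div_neg_of_neg_of_pos (hdesc i) (hα i)
  have hd : d ≠ 0 := by
    rintro rfl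
    simpa using hdesc 0
  set c := ⟪d, B d⟫
  have hc : 0 < c := hB d hd
  have ht : 0 ≤ -M / c := div_nonneg (by linarith) hc.le
  refine ⟨(-M / c) • d, ?_⟩
  -- at `t = -M / c` the quadratic `t M + t² c / 2` takes its minimum `-M² / (2c)`
  have hval : -M / c * M + (-M / c) ^ 2 * c / 2 = -(M ^ 2 / (2 * c)) := by
    field_simp
    ring
  rw [descentModel_smul g α B ht, hval, neg_lt_zero]
  have := hM.ne
  positivity

end descentModel

theorem stmt7_general {n m : ℕ} [NeZero m] (F : Fin m → EuclideanSpace ℝ (Fin n) → ℝ)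
    (B : EuclideanSpace ℝ (Fin n) →ₗ[ℝ] EuclideanSpace ℝ (Fin n))
    (hposdef : ∀ x : EuclideanSpace ℝ (Fin n), x ≠ 0 → 0 < ⟪x, B x⟫)
    (x : EuclideanSpace ℝ (Fin n)) (α : Fin m → ℝ) (hα : ∀ i, 0 < α i)
    (dStar : EuclideanSpace ℝ (Fin n))
    (hmin : ∀ d : EuclideanSpace ℝ (Fin n),
      (fmax fun i => ⟪gradient (F i) x, dStar⟫ / α i) + ⟪dStar, B dStar⟫ / 2 ≤
        (fmax fun i => ⟪gradient (F i) x, d⟫ / α i) + ⟪d, B d⟫ / 2) :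
    (¬ParetoCritical F x ↔ dStar ≠ 0) ∧
      (dStar ≠ 0 ↔ ∀ i, ⟪gradient (F i) x, dStar⟫ < 0) := by
  set g := fun i => gradient (F i) x
  have hmin' : ∀ d, descentModel g α B dStar ≤ descentModel g α B d := hmin
  have hdesc : dStar ≠ 0 → ∀ i, ⟪g i, dStar⟫ < 0 := fun hd =>
    inner_neg_of_descentModel_nonpos hα hposdef hd (descentModel_zero g α B ▸ hmin' 0)
  have hne : (∀ i, ⟪g i, dStar⟫ < 0) → dStar ≠ 0 := by
    rintro h rfl
    simpa using h 0
  rw [ParetoCritical, not_not]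
  refine ⟨⟨fun ⟨d, hd⟩ => ?_, fun hd => ⟨dStar, hdesc hd⟩⟩, ⟨hdesc, hne⟩⟩
  obtain ⟨e, he⟩ := exists_descentModel_neg hα hposdef hd
  rintro rfl
  exact (hmin' e).not_gt (by rwa [descentModel_zero])

/-- For the unique minimizer `d*` of
`d ↦ max_i ⟨∇F_i(x), d⟩/α_i + ‖d‖_B²/2`, the following are equivalent:
(a) `x` is not Pareto critical; (b) `d* ≠ 0`; (c) `d*` is a descent direction. -/
theorem stmt7 {n m : ℕ} [NeZero m] (F : Fin m → EuclideanSpace ℝ (Fin n) → ℝ)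
    (hF : ∀ i, ContDiff ℝ 1 (F i))
    (B : EuclideanSpace ℝ (Fin n) →ₗ[ℝ] EuclideanSpace ℝ (Fin n))
    (hsym : ∀ x y : EuclideanSpace ℝ (Fin n), ⟪B x, y⟫ = ⟪x, B y⟫)
    (hposdef : ∀ x : EuclideanSpace ℝ (Fin n), x ≠ 0 → 0 < ⟪x, B x⟫)
    (x : EuclideanSpace ℝ (Fin n)) (α : Fin m → ℝ) (hα : ∀ i, 0 < α i)
    (dStar : EuclideanSpace ℝ (Fin n))
    (hmin : ∀ d : EuclideanSpace ℝ (Fin n),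
      (fmax fun i => ⟪gradient (F i) x, dStar⟫ / α i) + ⟪dStar, B dStar⟫ / 2 ≤
        (fmax fun i => ⟪gradient (F i) x, d⟫ / α i) + ⟪d, B d⟫ / 2) :
    (¬ParetoCritical F x ↔ dStar ≠ 0) ∧
      (dStar ≠ 0 ↔ ∀ i, ⟪gradient (F i) x, dStar⟫ < 0) :=
  stmt7_general F B hposdef x α hα dStar hmin
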